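/- arXiv:1805.06963 — 4 statements merged into one kernel-verified Lean document; each statement's English description precedes it below -/
import Mathlib

section
/- Let V, Ṽ satisfy the MM assumptions: X closed convex, V continuous and directionally differentiable, Ṽ(·|·) continuous on X × X, y ∈ argmin_{x∈X} {Ṽ(x|y) - V(x)} for all y ∈ X, and Ṽ'(x; d|x) = V'(x; d) for all feasible directions d at x ∈ X. Then every limit point x* of the MM sequence x^{k+1} ∈ argmin_{x∈X} Ṽ(x|x^k) is a d-stationary point of min_{x∈X} V(x), i.e., V'(x*; y - x*) ≥ 0 for all y ∈ X. -/
/-!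
The MM values `V (x k)` decrease, because `V - Ṽ(·|y)` is maximal at `y` and `x (k+1)` minimizes
`Ṽ(·|x k)`. A monotone sequence converges as soon as a subsequence does, so `V (x k) → V x*`, and
`V (x (k+1)) - V (x k) → 0` along the whole sequence. Passing to the limit along the subsequence in
`V (x (k+1)) - V (x k) + Ṽ(x k|x k) ≤ Ṽ(z|x k)` shows that `x*` minimizes its own surrogate
`Ṽ(·|x*)` over `X`; by convexity of `X` and derivative consistency the one-sided slopes of
`Ṽ(·|x*)` at `x*` towards `y ∈ X` are nonnegative and tend to `V'(x*; y - x*)`.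
-/

open Filter Topology

theorem IsMinOn.nonneg_of_tendsto_slope {E : Type*} [AddCommGroup E] [Module ℝ E]
    {f : E → ℝ} {s : Set E} {a b : E} {D : ℝ} (hmin : IsMinOn f s a) (hs : Convex ℝ s)
    (ha : a ∈ s) (hb : b ∈ s)
    (hD : Tendsto (fun t : ℝ => (f (a + t • (b - a)) - f a) / t) (𝓝[>] 0) (𝓝 D)) :
    0 ≤ D := by
  refine ge_of_tendsto hD ?_
  filter_upwards [Ioc_mem_nhdsGT zero_lt_one] with t ht
  have hmem : a + t • (b - a) ∈ s := hs.add_smul_sub_mem ha hb (Set.Ioc_subset_Icc_self ht)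
  exact div_nonneg (sub_nonneg.2 (isMinOn_iff.1 hmin _ hmem)) ht.1.le

section MajorizationMinimization

variable {α : Type*} {X : Set α} {V : α → ℝ} {Vt : α → α → ℝ} {x : ℕ → α}

theorem mm_value_succ_sub_le (hupper : ∀ y ∈ X, ∀ z ∈ X, Vt y y - V y ≤ Vt z y - V z)
    (hxX : ∀ k, x k ∈ X) (hargmin : ∀ k, ∀ z ∈ X, Vt (x (k + 1)) (x k) ≤ Vt z (x k))
    (k : ℕ) {z : α} (hz : z ∈ X) :
    V (x (k + 1)) - V (x k) ≤ Vt z (x k) - Vt (x k) (x k) := by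
  have hmajor := hupper (x k) (hxX k) (x (k + 1)) (hxX (k + 1))
  have hstep := hargmin k z hz
  linarith

theorem mm_value_antitone (hupper : ∀ y ∈ X, ∀ z ∈ X, Vt y y - V y ≤ Vt z y - V z)
    (hxX : ∀ k, x k ∈ X) (hargmin : ∀ k, ∀ z ∈ X, Vt (x (k + 1)) (x k) ≤ Vt z (x k)) :
    Antitone (V ∘ x) :=
  antitone_nat_of_succ_le fun k => by
    simpa using mm_value_succ_sub_le hupper hxX hargmin k (hxX k)

variable [TopologicalSpace α] {xstar : α} {σ : ℕ → ℕ}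

theorem tendsto_mm_value_of_subseq (hupper : ∀ y ∈ X, ∀ z ∈ X, Vt y y - V y ≤ Vt z y - V z)
    (hxX : ∀ k, x k ∈ X) (hargmin : ∀ k, ∀ z ∈ X, Vt (x (k + 1)) (x k) ≤ Vt z (x k))
    (hV : ContinuousAt V xstar) (hσ : Tendsto σ atTop atTop)
    (hxσ : Tendsto (x ∘ σ) atTop (𝓝 xstar)) :
    Tendsto (V ∘ x) atTop (𝓝 (V xstar)) :=
  (tendsto_iff_tendsto_subseq_of_antitone (mm_value_antitone hupper hxX hargmin) hσ).2
    (hV.tendsto.comp hxσ)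

theorem isMinOn_surrogate_of_subseq (hupper : ∀ y ∈ X, ∀ z ∈ X, Vt y y - V y ≤ Vt z y - V z)
    (hxX : ∀ k, x k ∈ X) (hargmin : ∀ k, ∀ z ∈ X, Vt (x (k + 1)) (x k) ≤ Vt z (x k))
    (hV : ContinuousAt V xstar) (hVt : Continuous fun p : α × α => Vt p.1 p.2)
    (hσ : Tendsto σ atTop atTop) (hxσ : Tendsto (x ∘ σ) atTop (𝓝 xstar)) :
    IsMinOn (fun z => Vt z xstar) X xstar := by
  refine isMinOn_iff.2 fun z hz => ?_
  have hvalue := tendsto_mm_value_of_subseq hupper hxX hargmin hV hσ hxσ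
  have hgap : Tendsto (fun t => V (x (σ t + 1)) - V (x (σ t))) atTop (𝓝 (V xstar - V xstar)) :=
    (hvalue.comp ((tendsto_add_atTop_nat 1).comp hσ)).sub (hvalue.comp hσ)
  have hdiag : Tendsto (fun t => Vt (x (σ t)) (x (σ t))) atTop (𝓝 (Vt xstar xstar)) :=
    (hVt.comp (continuous_id.prodMk continuous_id)).continuousAt.tendsto.comp hxσ
  have hsurrogate : Tendsto (fun t => Vt z (x (σ t))) atTop (𝓝 (Vt z xstar)) :=
    (hVt.comp (continuous_const.prodMk continuous_id)).continuousAt.tendsto.comp hxσ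
  have hlim := le_of_tendsto_of_tendsto' (hgap.add hdiag) hsurrogate fun t => by
    have hstep := mm_value_succ_sub_le hupper hxX hargmin (σ t) hz
    linarith
  simpa using hlim

end MajorizationMinimization

theorem mm_limit_points_are_d_stationary_general
    (m : ℕ) (X : Set (EuclideanSpace ℝ (Fin m)))
    (V : EuclideanSpace ℝ (Fin m) → ℝ)
    (Vt : EuclideanSpace ℝ (Fin m) → EuclideanSpace ℝ (Fin m) → ℝ)  -- Vt x y = Ṽ(x | y)
    (DV : EuclideanSpace ℝ (Fin m) → EuclideanSpace ℝ (Fin m) → ℝ)  -- DV x d = V'(x; d)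
    (hXclosed : IsClosed X) (hXconvex : Convex ℝ X)
    (hVcont : Continuous V)
    -- the surrogate is jointly continuous:
    (hVtcont : Continuous fun p : EuclideanSpace ℝ (Fin m) × EuclideanSpace ℝ (Fin m) =>
      Vt p.1 p.2)
    -- upperbound property: for each y ∈ X, y minimizes x ↦ Ṽ(x|y) - V(x) over X:
    (hupper : ∀ y ∈ X, ∀ x ∈ X, Vt y y - V y ≤ Vt x y - V x)
    -- derivative consistency: Ṽ'(x; d | x) = V'(x; d):
    (hconsistent : ∀ x ∈ X, ∀ d : EuclideanSpace ℝ (Fin m), (∃ t > (0 : ℝ), x + t • d ∈ X) →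
      Tendsto (fun t : ℝ => (Vt (x + t • d) x - Vt x x) / t) (𝓝[>] (0 : ℝ)) (𝓝 (DV x d)))
    -- the MM sequence:
    (x : ℕ → EuclideanSpace ℝ (Fin m))
    (hxX : ∀ k, x k ∈ X)
    (hargmin : ∀ k, ∀ z ∈ X, Vt (x (k + 1)) (x k) ≤ Vt z (x k))
    -- x* is a limit point of the sequence:
    (xstar : EuclideanSpace ℝ (Fin m))
    (hlim : ∃ σ : ℕ → ℕ, StrictMono σ ∧ Tendsto (fun t => x (σ t)) atTop (𝓝 xstar)) :
    ∀ y ∈ X, 0 ≤ DV xstar (y - xstar) := by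
  obtain ⟨σ, hσ, hxσ⟩ := hlim
  have hxstarX : xstar ∈ X := hXclosed.mem_of_tendsto hxσ (.of_forall fun t => hxX (σ t))
  have hmin : IsMinOn (fun z => Vt z xstar) X xstar :=
    isMinOn_surrogate_of_subseq hupper hxX hargmin hVcont.continuousAt hVtcont
      hσ.tendsto_atTop hxσ
  intro y hy
  exact hmin.nonneg_of_tendsto_slope hXconvex hxstarX hy
    (hconsistent xstar hxstarX _ ⟨1, one_pos, by simpa using hy⟩)

/-- Convergence of the MM algorithm: under the MM assumptions, every limit point `x*` of the
MM sequence is a d-stationary point of `min_{x ∈ X} V(x)`, i.e. `V'(x*; y - x*) ≥ 0` for all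
`y ∈ X`. -/
theorem mm_limit_points_are_d_stationary
    (m : ℕ) (X : Set (EuclideanSpace ℝ (Fin m)))
    (V : EuclideanSpace ℝ (Fin m) → ℝ)
    (Vt : EuclideanSpace ℝ (Fin m) → EuclideanSpace ℝ (Fin m) → ℝ)  -- Vt x y = Ṽ(x | y)
    (DV : EuclideanSpace ℝ (Fin m) → EuclideanSpace ℝ (Fin m) → ℝ)  -- DV x d = V'(x; d)
    (hXne : X.Nonempty) (hXclosed : IsClosed X) (hXconvex : Convex ℝ X)
    (hVcont : Continuous V)
    (hVbdd : BddBelow (V '' X))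
    -- V is directionally differentiable on X along feasible directions, with derivative DV:
    (hDV : ∀ x ∈ X, ∀ d : EuclideanSpace ℝ (Fin m), (∃ t > (0 : ℝ), x + t • d ∈ X) →
      Tendsto (fun t : ℝ => (V (x + t • d) - V x) / t) (𝓝[>] (0 : ℝ)) (𝓝 (DV x d)))
    -- the surrogate is jointly continuous:
    (hVtcont : Continuous fun p : EuclideanSpace ℝ (Fin m) × EuclideanSpace ℝ (Fin m) =>
      Vt p.1 p.2)
    -- upperbound property: for each y ∈ X, y minimizes x ↦ Ṽ(x|y) - V(x) over X:
    (hupper : ∀ y ∈ X, ∀ x ∈ X, Vt y y - V y ≤ Vt x y - V x)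
    -- derivative consistency: Ṽ'(x; d | x) = V'(x; d):
    (hconsistent : ∀ x ∈ X, ∀ d : EuclideanSpace ℝ (Fin m), (∃ t > (0 : ℝ), x + t • d ∈ X) →
      Tendsto (fun t : ℝ => (Vt (x + t • d) x - Vt x x) / t) (𝓝[>] (0 : ℝ)) (𝓝 (DV x d)))
    -- the MM sequence:
    (x : ℕ → EuclideanSpace ℝ (Fin m))
    (hxX : ∀ k, x k ∈ X)
    (hargmin : ∀ k, ∀ z ∈ X, Vt (x (k + 1)) (x k) ≤ Vt z (x k))
    -- x* is a limit point of the sequence: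
    (xstar : EuclideanSpace ℝ (Fin m))
    (hlim : ∃ σ : ℕ → ℕ, StrictMono σ ∧ Tendsto (fun t => x (σ t)) atTop (𝓝 xstar)) :
    ∀ y ∈ X, 0 ≤ DV xstar (y - xstar) :=
  mm_limit_points_are_d_stationary_general m X V Vt DV hXclosed hXconvex hVcont hVtcont hupper
    hconsistent x hxX hargmin xstar hlim
end

section
/- Let {Y^k}, {W^k}, {Z^k} be real sequences with W^k ≥ 0 for all k, satisfying Y^{k+1} ≤ Y^k - W^k + Z^k for all k ≥ 0, and suppose the series Σ_{k=0}^∞ Z^k converges. Then either Y^k → -∞, or Y^k converges to a finite value and Σ_{k=0}^∞ W^k < ∞. -/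
/-!
The substitution `U n = Y n - ∑_{k<n} Z k` removes the perturbation: the recursion becomes
`U (n+1) + W n ≤ U n`, so `U` is nonincreasing and either tends to `-∞` or converges, and in the
second case telescoping gives `∑_{k<n} W k ≤ U 0 - U n ≤ U 0 - lim U`. Since the partial sums of
`Z` converge, `Y = U + ∑ Z` inherits the dichotomy of `U`.
-/

open Filter Topology Finset

section Descent

variable {u w : ℕ → ℝ}

theorem antitone_of_succ_add_le (hw : ∀ n, 0 ≤ w n) (h : ∀ n, u (n + 1) + w n ≤ u n) :
    Antitone u :=
  antitone_nat_of_succ_le fun n => by linarith [h n, hw n]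

theorem sum_range_add_le_of_succ_add_le (h : ∀ n, u (n + 1) + w n ≤ u n) (n : ℕ) :
    ∑ k ∈ range n, w k + u n ≤ u 0 := by
  induction n with
  | zero => simp
  | succ n ih => rw [sum_range_succ]; linarith [h n]

theorem summable_of_succ_add_le_of_tendsto {l : ℝ} (hw : ∀ n, 0 ≤ w n)
    (h : ∀ n, u (n + 1) + w n ≤ u n) (hu : Tendsto u atTop (𝓝 l)) : Summable w :=
  summable_of_sum_range_le (c := u 0 - l) hw fun n => by
    linarith [(antitone_of_succ_add_le hw h).le_of_tendsto hu n,
      sum_range_add_le_of_succ_add_le h n]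

end Descent

/-- Deterministic Robbins–Siegmund-type lemma: if `Y^{k+1} ≤ Y^k - W^k + Z^k` with `W^k ≥ 0`
and the series `∑ Z^k` converges, then either `Y^k → -∞`, or `Y^k` converges to a finite value
and `∑ W^k < ∞`. -/
theorem robbins_siegmund_deterministic
    (Y W Z : ℕ → ℝ)
    (hW : ∀ k, 0 ≤ W k)
    (hrec : ∀ k, Y (k + 1) ≤ Y k - W k + Z k)
    (hZ : ∃ S : ℝ, Tendsto (fun n => ∑ k ∈ Finset.range n, Z k) atTop (𝓝 S)) :
    Tendsto Y atTop atBot ∨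
      ((∃ l : ℝ, Tendsto Y atTop (𝓝 l)) ∧
        ∃ SW : ℝ, Tendsto (fun n => ∑ k ∈ Finset.range n, W k) atTop (𝓝 SW)) := by
  obtain ⟨S, hS⟩ := hZ
  set U : ℕ → ℝ := fun n => Y n - ∑ k ∈ range n, Z k
  have hU : ∀ n, U (n + 1) + W n ≤ U n := fun n => by
    simp only [U, sum_range_succ]
    linarith [hrec n]
  have hY : Y = fun n => U n + ∑ k ∈ range n, Z k := by
    ext n
    simp [U]
  rcases tendsto_atTop_of_antitone (antitone_of_succ_add_le hW hU) with hbot | ⟨l, hl⟩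
  · exact Or.inl (hY ▸ hbot.atBot_add hS)
  · exact Or.inr ⟨⟨l + S, hY ▸ hl.add hS⟩, _,
      (summable_of_succ_add_le_of_tendsto hW hU hl).hasSum.tendsto_sum_nat⟩
end

section
/- Let 0 < λ < 1 and let {β^k} and {ν^k} be positive scalar sequences with Σ_k (β^k)² < ∞ and Σ_k (ν^k)² < ∞. Then Σ_{t=1}^∞ Σ_{l=1}^t λ^{t-l} β^t ν^l < ∞. -/
/-!
Bound each term by `λ^(t-l) (β_t² + ν_l²) / 2`. Every row and every column of the triangular
kernel `λ^(t-l)` sums to at most `(1 - λ)⁻¹`, so the partial sums of the absolute values of the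
series stay below `(1 - λ)⁻¹ (∑ β² + ∑ ν²) / 2`, and the series converges absolutely.
-/

open Filter Topology Finset

theorem sum_comp_le_tsum_of_injOn {α : Type*} {f : ℕ → ℝ} (hf : ∀ n, 0 ≤ f n) (hs : Summable f)
    {s : Finset α} {g : α → ℕ} (hg : Set.InjOn g s) : ∑ x ∈ s, f (g x) ≤ ∑' n, f n := by
  classical
  rw [← sum_image hg]
  exact hs.sum_le_tsum _ fun n _ => hf n

theorem sum_geometric_comp_le_of_injOn {α : Type*} {r : ℝ} (h0 : 0 ≤ r) (h1 : r < 1)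
    {s : Finset α} {g : α → ℕ} (hg : Set.InjOn g s) : ∑ x ∈ s, r ^ g x ≤ (1 - r)⁻¹ := by
  rw [← tsum_geometric_of_lt_one h0 h1]
  exact sum_comp_le_tsum_of_injOn (fun n => pow_nonneg h0 n) (summable_geometric_of_lt_one h0 h1) hg

theorem sum_sum_kernel_mul_le {ι : Type*} (s : Finset ι) {K : ι → ι → ℝ} {C : ℝ}
    (hK : ∀ i j, 0 ≤ K i j) (hrow : ∀ i ∈ s, ∑ j ∈ s, K i j ≤ C)
    (hcol : ∀ j ∈ s, ∑ i ∈ s, K i j ≤ C) (a b : ι → ℝ) :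
    ∑ i ∈ s, ∑ j ∈ s, K i j * (a i * b j) ≤ C / 2 * (∑ i ∈ s, a i ^ 2 + ∑ j ∈ s, b j ^ 2) := by
  have hamgm : ∀ i j, K i j * (a i * b j) ≤ a i ^ 2 / 2 * K i j + b j ^ 2 / 2 * K i j :=
    fun i j => by nlinarith [mul_nonneg (hK i j) (sq_nonneg (a i - b j))]
  have hA : ∑ i ∈ s, ∑ j ∈ s, a i ^ 2 / 2 * K i j ≤ ∑ i ∈ s, a i ^ 2 / 2 * C :=
    sum_le_sum fun i hi => by
      rw [← mul_sum]; exact mul_le_mul_of_nonneg_left (hrow i hi) (by positivity)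
  have hB : ∑ i ∈ s, ∑ j ∈ s, b j ^ 2 / 2 * K i j ≤ ∑ j ∈ s, b j ^ 2 / 2 * C := by
    rw [sum_comm]
    exact sum_le_sum fun j hj => by
      rw [← mul_sum]; exact mul_le_mul_of_nonneg_left (hcol j hj) (by positivity)
  calc ∑ i ∈ s, ∑ j ∈ s, K i j * (a i * b j)
      ≤ ∑ i ∈ s, ∑ j ∈ s, (a i ^ 2 / 2 * K i j + b j ^ 2 / 2 * K i j) :=
        sum_le_sum fun i _ => sum_le_sum fun j _ => hamgm i j
    _ ≤ ∑ i ∈ s, a i ^ 2 / 2 * C + ∑ j ∈ s, b j ^ 2 / 2 * C := by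
        simp only [sum_add_distrib]; exact add_le_add hA hB
    _ = C / 2 * (∑ i ∈ s, a i ^ 2 + ∑ j ∈ s, b j ^ 2) := by
        rw [mul_add, mul_sum, mul_sum]
        congr 1 <;> exact sum_congr rfl fun _ _ => by ring

theorem sum_Icc_sum_Icc_geometric_mul_le {r : ℝ} (h0 : 0 ≤ r) (h1 : r < 1) (a b : ℕ → ℝ)
    (T : ℕ) :
    ∑ t ∈ Icc 1 T, ∑ l ∈ Icc 1 t, r ^ (t - l) * (a t * b l)
      ≤ (1 - r)⁻¹ / 2 * (∑ t ∈ Icc 1 T, a t ^ 2 + ∑ l ∈ Icc 1 T, b l ^ 2) := by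
  set K : ℕ → ℕ → ℝ := fun t l => if l ≤ t then r ^ (t - l) else 0
  have htri : ∀ t ∈ Icc 1 T, ∑ l ∈ Icc 1 t, r ^ (t - l) * (a t * b l)
      = ∑ l ∈ Icc 1 T, K t l * (a t * b l) := fun t ht => by
    have : {l ∈ Icc 1 T | l ≤ t} = Icc 1 t := by
      ext l; simp only [mem_filter, mem_Icc] at ht ⊢; omega
    simp only [K, ite_mul, zero_mul, ← sum_filter, this]
  rw [sum_congr rfl htri]
  refine sum_sum_kernel_mul_le _ (fun t l => by positivity) (fun t _ => ?_) (fun l _ => ?_) a b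
  · simp only [K, ← sum_filter]
    refine sum_geometric_comp_le_of_injOn h0 h1 fun l hl l' hl' h => ?_
    simp only [coe_filter, mem_Icc, Set.mem_ofPred_eq] at hl hl' h
    omega
  · simp only [K, ← sum_filter]
    refine sum_geometric_comp_le_of_injOn h0 h1 fun t ht t' ht' h => ?_
    simp only [coe_filter, mem_Icc, Set.mem_ofPred_eq] at ht ht' h
    omega

theorem exists_tendsto_sum_Icc_of_sum_abs_le {f : ℕ → ℝ} {B : ℝ}
    (h : ∀ T, ∑ t ∈ Icc 1 T, |f t| ≤ B) :
    ∃ S, Tendsto (fun T => ∑ t ∈ Icc 1 T, f t) atTop (𝓝 S) := by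
  have hIcc : ∀ (g : ℕ → ℝ) T, ∑ t ∈ Icc 1 T, g t = ∑ n ∈ range T, g (n + 1) := fun g T => by
    rw [range_eq_Ico, ← Ico_add_one_right_eq_Icc, sum_Ico_add']
  have habs : Summable fun n => |f (n + 1)| :=
    summable_of_sum_range_le (fun n => abs_nonneg _) fun T => hIcc (|f ·|) T ▸ h T
  simp only [hIcc f]
  exact ⟨_, habs.of_abs.hasSum.tendsto_sum_nat⟩

theorem geometric_double_sum_summable_general
    (lam : ℝ) (hlam0 : 0 < lam) (hlam1 : lam < 1)
    (β ν : ℕ → ℝ)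
    (hβ : Summable fun k => (β k) ^ 2) (hν : Summable fun k => (ν k) ^ 2) :
    ∃ S : ℝ, Tendsto
      (fun T => ∑ t ∈ Finset.Icc 1 T, ∑ l ∈ Finset.Icc 1 t, lam ^ (t - l) * (β t * ν l))
      atTop (𝓝 S) := by
  refine exists_tendsto_sum_Icc_of_sum_abs_le
    (B := (1 - lam)⁻¹ / 2 * (∑' k, β k ^ 2 + ∑' k, ν k ^ 2)) fun T => ?_
  have hsq : ∀ (x : ℕ → ℝ), Summable (fun k => x k ^ 2) →
      ∑ k ∈ Icc 1 T, |x k| ^ 2 ≤ ∑' k, x k ^ 2 := fun x hx => by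
    simpa only [sq_abs] using hx.sum_le_tsum _ fun k _ => sq_nonneg (x k)
  calc ∑ t ∈ Icc 1 T, |∑ l ∈ Icc 1 t, lam ^ (t - l) * (β t * ν l)|
      ≤ ∑ t ∈ Icc 1 T, ∑ l ∈ Icc 1 t, lam ^ (t - l) * (|β t| * |ν l|) := by
        refine sum_le_sum fun t _ => (abs_sum_le_sum_abs _ _).trans_eq (sum_congr rfl fun l _ => ?_)
        rw [abs_mul, abs_mul, abs_of_nonneg (pow_nonneg hlam0.le _)]
    _ ≤ (1 - lam)⁻¹ / 2 * (∑ t ∈ Icc 1 T, |β t| ^ 2 + ∑ l ∈ Icc 1 T, |ν l| ^ 2) :=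
        sum_Icc_sum_Icc_geometric_mul_le hlam0.le hlam1 _ _ T
    _ ≤ (1 - lam)⁻¹ / 2 * (∑' k, β k ^ 2 + ∑' k, ν k ^ 2) := by
        gcongr
        · exact hsq β hβ
        · exact hsq ν hν

/-- If `0 < λ < 1` and `{β^k}`, `{ν^k}` are positive square-summable sequences, then
`∑_{t=1}^∞ ∑_{l=1}^t λ^{t-l} β^t ν^l < ∞` (the partial sums converge). -/
theorem geometric_double_sum_summable
    (lam : ℝ) (hlam0 : 0 < lam) (hlam1 : lam < 1)
    (β ν : ℕ → ℝ) (hβpos : ∀ k, 0 < β k) (hνpos : ∀ k, 0 < ν k)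
    (hβ : Summable fun k => (β k) ^ 2) (hν : Summable fun k => (ν k) ^ 2) :
    ∃ S : ℝ, Tendsto
      (fun T => ∑ t ∈ Finset.Icc 1 T, ∑ l ∈ Finset.Icc 1 t, lam ^ (t - l) * (β t * ν l))
      atTop (𝓝 S) :=
  geometric_double_sum_summable_general lam hlam0 hlam1 β ν hβ hν
end

section
/- Let F : ℝ^m → ℝ be C¹ with ∇F L-Lipschitz, let G be convex, and let X be closed convex. For x ∈ X, let x̂(x) be the unique minimizer over X of F̃(z|x) + G(z), where F̃(·|x) is τ-strongly convex, differentiable, and satisfies ∇F̃(x|x) = ∇F(x). Then x is a fixed point of x̂ (i.e., x̂(x) = x) if and only if x is a d-stationary point of min_{z∈X} F(z) + G(z), i.e., ∇F(x)ᵀ(y - x) + G'(x; y - x) ≥ 0 for all y ∈ X. -/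
open Filter Topology

/-!
If `x̂ = x`, then `x` minimises `F̃(·|x) + G` over the convex set `X`, so the one-sided
directional derivative of `F̃(·|x) + G` at `x` towards any `y ∈ X` is nonnegative; by gradient
consistency this derivative is `⟨∇F(x), y - x⟩ + G'(x; y - x)`. Conversely, for a convex
function the one-sided directional derivative towards `w` minorises the increment to `w`, so
d-stationarity and the convexity of `F̃(·|x)` and `G` make `x` a minimiser of `F̃(·|x) + G` over
`X`, hence `x = x̂` by uniqueness.
-/

section RightDirDeriv

variable {E : Type*} [NormedAddCommGroup E] [NormedSpace ℝ E]

def HasRightDirDerivAt (f : E → ℝ) (l : ℝ) (x v : E) : Prop :=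
  Tendsto (fun t : ℝ => (f (x + t • v) - f x) / t) (𝓝[>] 0) (𝓝 l)

theorem HasLineDerivAt.hasRightDirDerivAt {f : E → ℝ} {l : ℝ} {x v : E}
    (h : HasLineDerivAt ℝ f l x v) : HasRightDirDerivAt f l x v := by
  simpa only [HasRightDirDerivAt, smul_eq_mul, div_eq_inv_mul] using h.tendsto_slope_zero_right

theorem HasRightDirDerivAt.add {f g : E → ℝ} {l k : ℝ} {x v : E}
    (hf : HasRightDirDerivAt f l x v) (hg : HasRightDirDerivAt g k x v) :
    HasRightDirDerivAt (f + g) (l + k) x v := by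
  refine (Tendsto.add hf hg).congr fun t => ?_
  simp only [Pi.add_apply]
  ring

theorem IsMinOn.nonneg_of_hasRightDirDerivAt {f : E → ℝ} {s : Set E} {x y : E} {l : ℝ}
    (hs : Convex ℝ s) (hmin : IsMinOn f s x) (hx : x ∈ s) (hy : y ∈ s)
    (hl : HasRightDirDerivAt f l x (y - x)) : 0 ≤ l := by
  refine ge_of_tendsto hl ?_
  filter_upwards [Ioo_mem_nhdsGT (zero_lt_one' ℝ)] with t ⟨ht0, ht1⟩
  have hmem : x + t • (y - x) ∈ s := hs.add_smul_sub_mem hx hy ⟨ht0.le, ht1.le⟩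
  exact div_nonneg (sub_nonneg.2 (hmin hmem)) ht0.le

theorem ConvexOn.le_sub_of_hasRightDirDerivAt {f : E → ℝ} {s : Set E} {x y : E} {l : ℝ}
    (hf : ConvexOn ℝ s f) (hx : x ∈ s) (hy : y ∈ s)
    (hl : HasRightDirDerivAt f l x (y - x)) : l ≤ f y - f x := by
  refine le_of_tendsto hl ?_
  filter_upwards [Ioo_mem_nhdsGT (zero_lt_one' ℝ)] with t ⟨ht0, ht1⟩
  have hsegment : x + t • (y - x) = (1 - t) • x + t • y := by
    rw [smul_sub, sub_smul, one_smul]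
    abel
  have hconv := hf.2 hx hy (sub_nonneg.2 ht1.le) ht0.le (sub_add_cancel 1 t)
  rw [smul_eq_mul, smul_eq_mul] at hconv
  rw [hsegment, div_le_iff₀ ht0]
  linarith

end RightDirDeriv

theorem sca_fixed_point_iff_d_stationary_general
    (m : ℕ) (τ : ℝ) (hτ : 0 < τ)
    (G Ft : EuclideanSpace ℝ (Fin m) → ℝ)
    (gF gFt : EuclideanSpace ℝ (Fin m) → EuclideanSpace ℝ (Fin m))
    (hG : ConvexOn ℝ Set.univ G)
    -- directional derivative of the convex function G:
    (dG : EuclideanSpace ℝ (Fin m) → EuclideanSpace ℝ (Fin m) → ℝ)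
    (hdG : ∀ z d, Tendsto (fun t : ℝ => (G (z + t • d) - G z) / t)
      (𝓝[>] (0 : ℝ)) (𝓝 (dG z d)))
    (X : Set (EuclideanSpace ℝ (Fin m))) (hXconvex : Convex ℝ X)
    (x : EuclideanSpace ℝ (Fin m)) (hx : x ∈ X)
    -- Ft = F̃(·|x) is τ-strongly convex, differentiable, and gradient-consistent with F at x:
    (hFt_strong : StrongConvexOn X τ Ft)
    (hFt_diff : ∀ z, HasGradientAt Ft (gFt z) z)
    (hFt_consistent : gFt x = gF x)
    -- x̂ = x̂(x) is the (unique) minimizer of F̃(·|x) + G over X: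
    (xhat : EuclideanSpace ℝ (Fin m))
    (hxhat_min : ∀ z ∈ X, Ft xhat + G xhat ≤ Ft z + G z)
    (hxhat_uniq : ∀ z ∈ X, (∀ w ∈ X, Ft z + G z ≤ Ft w + G w) → z = xhat) :
    xhat = x ↔ ∀ y ∈ X, 0 ≤ inner ℝ (gF x) (y - x) + dG x (y - x) := by
  have hFt_dir : ∀ v, HasRightDirDerivAt Ft (inner ℝ (gFt x) v) x v := fun v => by
    simpa using ((hFt_diff x).hasFDerivAt.hasLineDerivAt v).hasRightDirDerivAt
  rw [← hFt_consistent]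
  constructor
  · rintro rfl y hy
    exact IsMinOn.nonneg_of_hasRightDirDerivAt hXconvex (isMinOn_iff.2 hxhat_min) hx hy
      ((hFt_dir _).add (hdG xhat _))
  · intro hstat
    refine (hxhat_uniq x hx fun w hw => ?_).symm
    have hFt_le := (hFt_strong.strictConvexOn hτ).convexOn.le_sub_of_hasRightDirDerivAt hx hw
      (hFt_dir (w - x))
    have hG_le := hG.le_sub_of_hasRightDirDerivAt trivial trivial (hdG x (w - x))
    linarith [hstat w hw]

/-- Fixed points of the SCA best-response map coincide with d-stationary points: with `F` C¹
(`L`-Lipschitz gradient), `G` convex, `X` closed convex, `x ∈ X`, and a `τ`-strongly convex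
differentiable surrogate `F̃(·|x)` satisfying `∇F̃(x|x) = ∇F(x)`, the unique minimizer `x̂(x)`
of `F̃(·|x) + G` over `X` equals `x` if and only if `x` is d-stationary for `F + G` on `X`,
i.e. `∇F(x)ᵀ(y - x) + G'(x; y - x) ≥ 0` for all `y ∈ X`. -/
theorem sca_fixed_point_iff_d_stationary
    (m : ℕ) (L τ : ℝ) (hL : 0 < L) (hτ : 0 < τ)
    (F G Ft : EuclideanSpace ℝ (Fin m) → ℝ)
    (gF gFt : EuclideanSpace ℝ (Fin m) → EuclideanSpace ℝ (Fin m))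
    (hF : ∀ z, HasGradientAt F (gF z) z)
    (hLip : LipschitzWith (Real.toNNReal L) gF)
    (hG : ConvexOn ℝ Set.univ G)
    -- directional derivative of the convex function G:
    (dG : EuclideanSpace ℝ (Fin m) → EuclideanSpace ℝ (Fin m) → ℝ)
    (hdG : ∀ z d, Tendsto (fun t : ℝ => (G (z + t • d) - G z) / t)
      (𝓝[>] (0 : ℝ)) (𝓝 (dG z d)))
    (X : Set (EuclideanSpace ℝ (Fin m))) (hXclosed : IsClosed X) (hXconvex : Convex ℝ X)
    (x : EuclideanSpace ℝ (Fin m)) (hx : x ∈ X)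
    -- Ft = F̃(·|x) is τ-strongly convex, differentiable, and gradient-consistent with F at x:
    (hFt_strong : StrongConvexOn X τ Ft)
    (hFt_diff : ∀ z, HasGradientAt Ft (gFt z) z)
    (hFt_consistent : gFt x = gF x)
    -- x̂ = x̂(x) is the (unique) minimizer of F̃(·|x) + G over X:
    (xhat : EuclideanSpace ℝ (Fin m)) (hxhatX : xhat ∈ X)
    (hxhat_min : ∀ z ∈ X, Ft xhat + G xhat ≤ Ft z + G z)
    (hxhat_uniq : ∀ z ∈ X, (∀ w ∈ X, Ft z + G z ≤ Ft w + G w) → z = xhat) :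
    xhat = x ↔ ∀ y ∈ X, 0 ≤ inner ℝ (gF x) (y - x) + dG x (y - x) :=
  sca_fixed_point_iff_d_stationary_general m τ hτ G Ft gF gFt hG dG hdG X hXconvex x hx hFt_strong
    hFt_diff hFt_consistent xhat hxhat_min hxhat_uniq
end
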